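/- arXiv:0907.2584 — 2 statements merged into one kernel-verified Lean document; each statement's English description precedes it below -/
import Mathlib

section
/- The set of solutions of D^s f = 0, where s = s'(p+1) + s'' with 0 ≤ s'' < p+1, is a complex vector space of dimension s: the first s'' components f_k are arbitrary polynomials of degree at most s' and the remaining p+1-s'' components are arbitrary polynomials of degree at most s'-1. -/
open Complex Finset

/-- The `q`-integer `[n]_q = 1 + q + ⋯ + q^(n-1)` (so `[0]_q = 0`). -/
noncomputable def qint (q : ℂ) (n : ℕ) : ℂ := ∑ i ∈ Finset.range n, q ^ i

/-- The `q`-factorial `[n]_q! = [1]_q [2]_q ⋯ [n]_q`, with `[0]_q! = 1`. -/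
noncomputable def qfact (q : ℂ) (n : ℕ) : ℂ := ∏ i ∈ Finset.range n, qint q (i + 1)

/-- The parasupercovariant derivative `D = ∂_θ + (θ^p/[p]_q!) ∂_x` acting on the
components `(f_0, …, f_p)` of a parasuperfunction `f(x,θ) = Σ f_k(x) θ^k`:
`(Df)_k = [k+1]_q f_{k+1}` for `k < p` and `(Df)_p = (1/[p]_q!) f_0'`. -/
noncomputable def Dop (p : ℕ) (q : ℂ) (f : ℕ → ℝ → ℂ) : ℕ → ℝ → ℂ :=
  fun k x =>
    if k < p then qint q (k + 1) * f (k + 1) x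
    else if k = p then (qfact q p)⁻¹ * deriv (f 0) x
    else 0

open Polynomial in
lemma antideriv (Q : Polynomial ℂ) (n : ℕ) (hQ : Q.degree < (n : WithBot ℕ)) :
    ∃ P : Polynomial ℂ, P.derivative = Q ∧ P.degree < ((n+1 : ℕ) : WithBot ℕ) := by
  refine ⟨Q.sum fun i a => C (a / (i+1)) * X^(i+1), ?_, ?_⟩
  · rw [Polynomial.sum, derivative_sum]
    have : ∀ i ∈ Q.support, derivative (C (Q.coeff i / (i+1)) * X^(i+1))
        = C (Q.coeff i) * X ^ i := by
      intro i _
      have hne : ((i : ℂ) + 1) ≠ 0 := by exact_mod_cast Nat.cast_add_one_ne_zero (R := ℂ) i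
      rw [derivative_C_mul, derivative_X_pow, ← mul_assoc, ← C_mul, Nat.add_sub_cancel,
        show ((i+1:ℕ):ℂ) = (i:ℂ)+1 by push_cast; ring, div_mul_cancel₀ _ hne]
    rw [Finset.sum_congr rfl this]
    exact Q.sum_C_mul_X_pow_eq
  · have hn : (n : WithBot ℕ) < ((n+1 : ℕ) : WithBot ℕ) := by exact_mod_cast Nat.lt_succ_self n
    refine lt_of_le_of_lt (le_trans (degree_sum_le _ _) ?_) hn
    refine Finset.sup_le fun i hi => le_trans (degree_C_mul_X_pow_le _ _) ?_
    have h1 : (i : WithBot ℕ) ≤ Q.degree := le_degree_of_ne_zero (Polynomial.mem_support_iff.mp hi)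
    have : i < n := by exact_mod_cast lt_of_le_of_lt h1 hQ
    exact_mod_cast this

open Polynomial in
lemma deriv_polyEval (P : Polynomial ℂ) :
    deriv (fun x : ℝ => P.eval (x : ℂ)) = fun x : ℝ => P.derivative.eval (x : ℂ) := by
  funext x
  exact ((P.hasDerivAt (x : ℂ)).comp_ofReal).deriv

open Polynomial in
lemma contDiff_polyEval (P : Polynomial ℂ) : ContDiff ℝ (⊤ : ℕ∞) (fun x : ℝ => P.eval (x : ℂ)) := by
  induction P using Polynomial.induction_on' with
  | add p q hp hq => simpa [Polynomial.eval_add] using hp.add hq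
  | monomial n a =>
      simp only [Polynomial.eval_monomial]
      exact contDiff_const.mul (Complex.ofRealCLM.contDiff.pow n)

open Polynomial in
lemma iteratedDeriv_polyEval (P : Polynomial ℂ) (n : ℕ) :
    iteratedDeriv n (fun x : ℝ => P.eval (x : ℂ))
      = fun x : ℝ => ((Polynomial.derivative)^[n] P).eval (x : ℂ) := by
  induction n generalizing P with
  | zero => simp
  | succ n ih =>
    rw [iteratedDeriv_succ', deriv_polyEval, ih, Function.iterate_succ_apply]

open Polynomial in
lemma iteratedDeriv_eq_zero_iff_poly (n : ℕ) (g : ℝ → ℂ) (hg : ContDiff ℝ (⊤ : ℕ∞) g) :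
    (∀ x, iteratedDeriv n g x = 0) ↔
      ∃ P : Polynomial ℂ, P.degree < (n : WithBot ℕ) ∧ ∀ x : ℝ, g x = P.eval (x : ℂ) := by
  constructor
  · intro h
    induction n generalizing g with
    | zero =>
      exact ⟨0, by simp, fun x => by simpa using h x⟩
    | succ n ih =>
      have hg' : ContDiff ℝ (⊤ : ℕ∞) (deriv g) := (contDiff_infty_iff_deriv.mp hg).2
      obtain ⟨Q, hQdeg, hQ⟩ := ih (deriv g) hg' (fun x => by
        have := h x; rwa [iteratedDeriv_succ'] at this)
      obtain ⟨P, hPQ, hPdeg⟩ := antideriv Q n hQdeg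
      have hd : ∀ x : ℝ, deriv (fun y => g y - P.eval (y : ℂ)) x = 0 := by
        intro x
        have h1 : HasDerivAt g (Q.eval (x:ℂ)) x := by
          have := (hg.differentiable (by simp) x).hasDerivAt
          rwa [hQ x] at this
        have h2 : HasDerivAt (fun y : ℝ => P.eval (y : ℂ)) (Q.eval (x:ℂ)) x := by
          have := (P.hasDerivAt (x : ℂ)).comp_ofReal
          rwa [hPQ] at this
        rw [show (fun y => g y - P.eval (y : ℂ)) = g - fun y : ℝ => P.eval (y : ℂ) from rfl, (h1.sub h2).deriv]
        ring
      have hdiff : Differentiable ℝ (fun y : ℝ => g y - P.eval (y : ℂ)) :=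
        (hg.differentiable (by simp)).sub
          ((contDiff_polyEval P).differentiable (by simp))
      have hconst : ∀ x : ℝ, g x - P.eval (x:ℂ) = g 0 - P.eval ((0:ℝ):ℂ) := fun x =>
        is_const_of_deriv_eq_zero hdiff hd x 0
      refine ⟨P + C (g 0 - P.eval ((0:ℝ):ℂ)), ?_, fun x => by
        have := hconst x
        rw [Polynomial.eval_add, Polynomial.eval_C]
        linear_combination this⟩
      have h1 : ((n+1 : ℕ) : WithBot ℕ) = (n : WithBot ℕ) + 1 := by push_cast; rfl
      calc (P + C (g 0 - P.eval ((0:ℝ):ℂ))).degree ≤ max P.degree (C _).degree := degree_add_le _ _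
        _ < ((n+1 : ℕ) : WithBot ℕ) := by
            apply max_lt hPdeg
            apply lt_of_le_of_lt (degree_C_le)
            rw [h1]
            exact_mod_cast lt_of_le_of_lt (by exact_mod_cast Nat.zero_le n) (lt_add_one _)
  · rintro ⟨P, hPdeg, hP⟩ x
    have : g = fun x : ℝ => P.eval (x : ℂ) := funext hP
    rw [this, iteratedDeriv_polyEval]
    rcases eq_or_ne P 0 with h0 | h0
    · simp [h0]
    · rw [Polynomial.iterate_derivative_eq_zero ((natDegree_lt_iff_degree_lt h0).mpr hPdeg)]
      simp

lemma qint_ne_zero (p : ℕ) (q : ℂ)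
    (hq : q = Complex.exp (2 * Real.pi * Complex.I / (p + 1)))
    (m : ℕ) (hm1 : 1 ≤ m) (hm2 : m ≤ p) : qint q m ≠ 0 := by
  intro h
  have hpow : q ^ m = 1 := by
    have := geom_sum_mul q m
    rw [← qint, h, zero_mul] at this
    have h2 : q ^ m - 1 = 0 := this.symm
    linear_combination h2
  rw [hq, ← Complex.exp_nat_mul, Complex.exp_eq_one_iff] at hpow
  obtain ⟨z, hz⟩ := hpow
  have hp1 : ((p : ℂ) + 1) ≠ 0 := by exact_mod_cast Nat.cast_add_one_ne_zero (R := ℂ) p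
  have h2πI : (2 * (Real.pi : ℂ) * Complex.I) ≠ 0 := by
    simp [Real.pi_ne_zero, Complex.I_ne_zero]
  have hm : (m : ℂ) = z * (p + 1) := by
    field_simp at hz
    have h3 : (m : ℂ) * (2 * (Real.pi:ℂ) * Complex.I)
        = (z * (p+1)) * (2 * (Real.pi:ℂ) * Complex.I) := by
      rw [hz]; ring
    exact mul_right_cancel₀ h2πI h3
  have hmz : (m : ℤ) = z * (p + 1) := by exact_mod_cast hm
  have hdvd : ((p : ℤ) + 1) ∣ (m : ℤ) := ⟨z, by linarith⟩
  have := Int.le_of_dvd (by exact_mod_cast hm1) hdvd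
  omega

lemma qfact_ne_zero (p : ℕ) (q : ℂ)
    (hq : q = Complex.exp (2 * Real.pi * Complex.I / (p + 1))) : qfact q p ≠ 0 := by
  rw [qfact, Finset.prod_ne_zero_iff]
  intro i hi
  exact qint_ne_zero p q hq (i+1) (Nat.le_add_left 1 i) (Finset.mem_range.mp hi)

lemma iteratedDeriv_cmul (c : ℂ) (n : ℕ) :
    ∀ (g : ℝ → ℂ), ContDiff ℝ (⊤ : ℕ∞) g →
      iteratedDeriv n (fun x => c * g x) = fun x => c * iteratedDeriv n g x := by
  induction n with
  | zero => intro g hg; simp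
  | succ n ih =>
    intro g hg
    have hdg : ContDiff ℝ (⊤ : ℕ∞) (deriv g) := (contDiff_infty_iff_deriv.mp hg).2
    rw [iteratedDeriv_succ', iteratedDeriv_succ']
    have : deriv (fun x => c * g x) = fun x => c * deriv g x := by
      funext x
      exact deriv_const_mul c (hg.differentiable (by simp) x)
    rw [this, ih _ hdg]

lemma Dop_smooth (p : ℕ) (q : ℂ) (f : ℕ → ℝ → ℂ) (hf : ∀ k ≤ p, ContDiff ℝ (⊤ : ℕ∞) (f k)) :
    ∀ k ≤ p, ContDiff ℝ (⊤ : ℕ∞) (Dop p q f k) := by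
  intro k hk
  by_cases h : k < p
  · have : Dop p q f k = fun x => qint q (k+1) * f (k+1) x := by
      funext x; simp [Dop, h]
    rw [this]; exact contDiff_const.mul (hf (k+1) h)
  · have hkp : k = p := le_antisymm hk (not_lt.mp h)
    have : Dop p q f k = fun x => (qfact q p)⁻¹ * deriv (f 0) x := by
      funext x; simp [Dop, h, hkp]
    rw [this]
    exact contDiff_const.mul (contDiff_infty_iff_deriv.mp (hf 0 (Nat.zero_le p))).2

lemma Dop_iterate (p : ℕ) (q : ℂ)
    (hq0 : ∀ m, 1 ≤ m → m ≤ p → qint q m ≠ 0) (hqf : qfact q p ≠ 0) (n : ℕ) :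
    ∀ (f : ℕ → ℝ → ℂ), (∀ k ≤ p, ContDiff ℝ (⊤ : ℕ∞) (f k)) → ∀ k ≤ p,
      ∃ c : ℂ, c ≠ 0 ∧ ∀ x, (Dop p q)^[n] f k x
        = c * iteratedDeriv ((k+n)/(p+1)) (f ((k+n) % (p+1))) x := by
  induction n with
  | zero =>
    intro f hf k hk
    refine ⟨1, one_ne_zero, fun x => ?_⟩
    rw [Nat.add_zero, Nat.div_eq_of_lt (by omega), Nat.mod_eq_of_lt (by omega)]
    simp
  | succ n ih =>
    intro f hf k hk
    rw [Function.iterate_succ_apply]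
    obtain ⟨c, hc, hcx⟩ := ih (Dop p q f) (Dop_smooth p q f hf) k hk
    set j := (k+n) % (p+1) with hj
    set m := (k+n) / (p+1) with hm
    have hjp : j ≤ p := by have := Nat.mod_lt (k+n) (y := p+1) (by omega); omega
    have hkn : k + n = m * (p+1) + j := by
      rw [hj, hm, Nat.mul_comm]; exact (Nat.div_add_mod (k+n) (p+1)).symm
    by_cases hjlt : j < p
    · have hDj : Dop p q f j = fun x => qint q (j+1) * f (j+1) x := by
        funext x; simp [Dop, hjlt]
      have heq : k + (n+1) = (j+1) + m * (p+1) := by omega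
      have hidx1 : (k + (n+1)) % (p+1) = j + 1 := by
        rw [heq, Nat.add_mul_mod_self_right, Nat.mod_eq_of_lt (by omega)]
      have hidx2 : (k + (n+1)) / (p+1) = m := by
        rw [heq, Nat.add_mul_div_right _ _ (by omega), Nat.div_eq_of_lt (by omega), Nat.zero_add]
      refine ⟨c * qint q (j+1), mul_ne_zero hc (hq0 (j+1) (by omega) (by omega)), fun x => ?_⟩
      rw [hcx x, hDj, iteratedDeriv_cmul _ _ _ (hf (j+1) (by omega)), hidx1, hidx2]
      ring
    · have hjp' : j = p := le_antisymm hjp (not_lt.mp hjlt)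
      have hDj : Dop p q f j = fun x => (qfact q p)⁻¹ * deriv (f 0) x := by
        funext x; simp [Dop, hjlt, hjp']
      have heq : k + (n+1) = 0 + (m+1) * (p+1) := by
        have : (m+1) * (p+1) = m * (p+1) + (p+1) := by ring
        omega
      have hidx1 : (k + (n+1)) % (p+1) = 0 := by
        rw [heq, Nat.add_mul_mod_self_right, Nat.zero_mod]
      have hidx2 : (k + (n+1)) / (p+1) = m + 1 := by
        rw [heq, Nat.add_mul_div_right _ _ (by omega), Nat.zero_div, Nat.zero_add]
      refine ⟨c * (qfact q p)⁻¹, mul_ne_zero hc (inv_ne_zero hqf), fun x => ?_⟩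
      rw [hcx x, hDj, iteratedDeriv_cmul _ _ _
        (contDiff_infty_iff_deriv.mp (hf 0 (Nat.zero_le p))).2, hidx1, hidx2,
        iteratedDeriv_succ', ]
      ring

/-- Solutions of `D^s f = 0` with `s = s'(p+1) + s''`, `0 ≤ s'' < p+1`: the first `s''`
components are arbitrary polynomials of degree at most `s'`, and the remaining `p+1-s''`
components are arbitrary polynomials of degree at most `s'-1` (so the solution set is a
complex vector space of dimension `s''(s'+1) + (p+1-s'')s' = s`). -/
theorem Dop_pow_eq_zero_iff_polynomial (p : ℕ) (hp : 1 ≤ p) (q : ℂ)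
    (hq : q = Complex.exp (2 * Real.pi * Complex.I / (p + 1)))
    (s' s'' : ℕ) (hs'' : s'' < p + 1)
    (f : ℕ → ℝ → ℂ) (hf : ∀ k ≤ p, ContDiff ℝ (⊤ : ℕ∞) (f k)) :
    (∀ k ≤ p, ∀ x : ℝ, (Dop p q)^[s' * (p + 1) + s''] f k x = 0) ↔
      ∀ k ≤ p, ∃ P : Polynomial ℂ,
        P.degree < (if k < s'' then ((s' + 1 : ℕ) : WithBot ℕ) else ((s' : ℕ) : WithBot ℕ)) ∧
        ∀ x : ℝ, f k x = P.eval (x : ℂ) := by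
  have hf' : ∀ k ≤ p, ContDiff ℝ (⊤ : ℕ∞) (f k) := fun k hk => (hf k hk).of_le (by simp)
  have key := Dop_iterate p q (qint_ne_zero p q hq) (qfact_ne_zero p q hq)
    (s' * (p + 1) + s'') f hf'
  set n := s' * (p + 1) + s'' with hn
  constructor
  · intro h j hj
    by_cases hjs : j < s''
    · -- k := j + (p+1) - s''
      have hk : j + (p+1) - s'' ≤ p := by omega
      obtain ⟨c, hc, hcx⟩ := key _ hk
      have hkn : j + (p+1) - s'' + n = j + (s'+1) * (p+1) := by
        have : (s'+1) * (p+1) = s' * (p+1) + (p+1) := by ring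
        omega
      have hmod : (j + (p+1) - s'' + n) % (p+1) = j := by
        rw [hkn, Nat.add_mul_mod_self_right, Nat.mod_eq_of_lt (by omega)]
      have hdiv : (j + (p+1) - s'' + n) / (p+1) = s' + 1 := by
        rw [hkn, Nat.add_mul_div_right _ _ (by omega), Nat.div_eq_of_lt (by omega), Nat.zero_add]
      have hzero : ∀ x, iteratedDeriv (s'+1) (f j) x = 0 := by
        intro x
        have := h _ hk x
        rw [hcx x, hmod, hdiv] at this
        exact (mul_eq_zero.mp this).resolve_left hc
      obtain ⟨P, hPdeg, hP⟩ := (iteratedDeriv_eq_zero_iff_poly (s'+1) (f j) (hf' j hj)).mp hzero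
      exact ⟨P, by rwa [if_pos hjs], hP⟩
    · -- k := j - s''
      have hk : j - s'' ≤ p := by omega
      obtain ⟨c, hc, hcx⟩ := key _ hk
      have hkn : j - s'' + n = j + s' * (p+1) := by omega
      have hmod : (j - s'' + n) % (p+1) = j := by
        rw [hkn, Nat.add_mul_mod_self_right, Nat.mod_eq_of_lt (by omega)]
      have hdiv : (j - s'' + n) / (p+1) = s' := by
        rw [hkn, Nat.add_mul_div_right _ _ (by omega), Nat.div_eq_of_lt (by omega), Nat.zero_add]
      have hzero : ∀ x, iteratedDeriv s' (f j) x = 0 := by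
        intro x
        have := h _ hk x
        rw [hcx x, hmod, hdiv] at this
        exact (mul_eq_zero.mp this).resolve_left hc
      obtain ⟨P, hPdeg, hP⟩ := (iteratedDeriv_eq_zero_iff_poly s' (f j) (hf' j hj)).mp hzero
      exact ⟨P, by rwa [if_neg hjs], hP⟩
  · intro h k hk x
    obtain ⟨c, hc, hcx⟩ := key k hk
    rw [hcx x]
    by_cases hks : k + s'' ≤ p
    · have hkn : k + n = (k + s'') + s' * (p+1) := by omega
      have hmod : (k + n) % (p+1) = k + s'' := by
        rw [hkn, Nat.add_mul_mod_self_right, Nat.mod_eq_of_lt (by omega)]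
      have hdiv : (k + n) / (p+1) = s' := by
        rw [hkn, Nat.add_mul_div_right _ _ (by omega), Nat.div_eq_of_lt (by omega), Nat.zero_add]
      obtain ⟨P, hPdeg, hP⟩ := h (k + s'') hks
      rw [if_neg (by omega)] at hPdeg
      have hzero := (iteratedDeriv_eq_zero_iff_poly s' (f (k + s'')) (hf' _ hks)).mpr
        ⟨P, hPdeg, hP⟩ x
      rw [hmod, hdiv, hzero, mul_zero]
    · have hkn : k + n = (k + s'' - (p+1)) + (s'+1) * (p+1) := by
        have : (s'+1) * (p+1) = s' * (p+1) + (p+1) := by ring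
        omega
      have hjle : k + s'' - (p+1) ≤ p := by omega
      have hmod : (k + n) % (p+1) = k + s'' - (p+1) := by
        rw [hkn, Nat.add_mul_mod_self_right, Nat.mod_eq_of_lt (by omega)]
      have hdiv : (k + n) / (p+1) = s' + 1 := by
        rw [hkn, Nat.add_mul_div_right _ _ (by omega), Nat.div_eq_of_lt (by omega), Nat.zero_add]
      obtain ⟨P, hPdeg, hP⟩ := h (k + s'' - (p+1)) hjle
      rw [if_pos (by omega)] at hPdeg
      have hzero := (iteratedDeriv_eq_zero_iff_poly (s'+1) (f (k + s'' - (p+1)))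
        (hf' _ hjle)).mpr ⟨P, hPdeg, hP⟩ x
      rw [hmod, hdiv, hzero, mul_zero]
end

section
/- For the degenerate recurrence f_{k+2} = 2α f_{k+1} - α² f_k, the matrix product F_k = T_k ⋯ T_1 (with T_{j+1} having rows (0,1) and (-α²/([j+2]_q[j+1]_q), 2α/[j+2]_q)) is given explicitly for 0 ≤ k ≤ p-1 by F_k = [[-(k-1)α^k/[k]_q!, kα^{k-1}/[k]_q!], [-kα^{k+1}/[k+1]_q!, (k+1)α^k/[k+1]_q!]]. -/
/-!
Write `G k` for the claimed closed form. Since `[k+1]_q! = [k]_q! [k+1]_q`, the identity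
`T_{k+1} G k = G (k+1)` is a rational-function identity once `[k]_q!`, `[k+1]_q` and `[k+2]_q` are
nonzero, and for a primitive `(p+1)`-th root of unity `q ≠ 1` the `q`-integer
`[n]_q = (q^n - 1)/(q - 1)` vanishes for no `0 < n < p + 1`. Induction from `G 0 = 1` concludes.
-/

open Complex Finset

open Matrix

section QInt

variable {q : ℂ} {m n : ℕ}

theorem qint_one (q : ℂ) : qint q 1 = 1 := by
  simp [qint]

theorem qfact_zero (q : ℂ) : qfact q 0 = 1 := by
  simp [qfact]

theorem qfact_succ (q : ℂ) (n : ℕ) : qfact q (n + 1) = qfact q n * qint q (n + 1) :=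
  prod_range_succ _ _

theorem IsPrimitiveRoot.qint_ne_zero (hq : IsPrimitiveRoot q m) (hn : n ≠ 0) (hnm : n < m) :
    qint q n ≠ 0 := by
  have hq1 : q ≠ 1 := hq.ne_one (by omega)
  rw [qint, geom_sum_eq hq1]
  exact div_ne_zero (sub_ne_zero.mpr (hq.pow_ne_one_of_pos_of_lt hn hnm)) (sub_ne_zero.mpr hq1)

theorem IsPrimitiveRoot.qfact_ne_zero (hq : IsPrimitiveRoot q m) (hnm : n < m) :
    qfact q n ≠ 0 :=
  prod_ne_zero_iff.mpr fun i hi => hq.qint_ne_zero (by omega) (by rw [mem_range] at hi; omega)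

end QInt

section DegenerateTransfer

variable (q α : ℂ)

noncomputable def degenerateTransfer (j : ℕ) : Matrix (Fin 2) (Fin 2) ℂ :=
  !![0, 1; -α ^ 2 / (qint q (j + 2) * qint q (j + 1)), 2 * α / qint q (j + 2)]

noncomputable def degenerateTransferProduct (k : ℕ) : Matrix (Fin 2) (Fin 2) ℂ :=
  !![-((k : ℂ) - 1) * α ^ k / qfact q k, (k : ℂ) * α ^ (k - 1) / qfact q k;
    -(k : ℂ) * α ^ (k + 1) / qfact q (k + 1), ((k : ℂ) + 1) * α ^ k / qfact q (k + 1)]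

theorem degenerateTransferProduct_zero : degenerateTransferProduct q α 0 = 1 := by
  ext i j
  fin_cases i <;> fin_cases j <;>
    simp [degenerateTransferProduct, qfact_succ, qfact_zero, qint_one]

variable {q} in
theorem degenerateTransfer_mul_degenerateTransferProduct {k : ℕ} (hk : qfact q k ≠ 0)
    (hk₁ : qint q (k + 1) ≠ 0) (hk₂ : qint q (k + 2) ≠ 0) :
    degenerateTransfer q α k * degenerateTransferProduct q α k =
      degenerateTransferProduct q α (k + 1) := by
  -- `k α^(k-1) α = k α^k` also at `k = 0`, where `α^(0-1) = α^0`
  have hpow : (k : ℂ) * α ^ (k - 1) * α = k * α ^ k := by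
    rcases Nat.eq_zero_or_pos k with rfl | hk0
    · simp
    · rw [mul_assoc, pow_sub_one_mul hk0.ne']
  ext i j
  fin_cases i <;> fin_cases j <;>
    simp only [degenerateTransfer, degenerateTransferProduct, mul_apply, Fin.sum_univ_two,
      of_apply, cons_val', cons_val_zero, cons_val_one, empty_val', cons_val_fin_one,
      Fin.zero_eta, Fin.mk_one, qfact_succ, Nat.add_sub_cancel] <;>
    push_cast <;> field_simp
  · ring
  · ring
  · ring
  · linear_combination (-α) * hpow

end DegenerateTransfer

theorem transfer_matrix_degenerate_general (p : ℕ) (q : ℂ)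
    (hq : q = Complex.exp (2 * Real.pi * Complex.I / (p + 1))) (α : ℂ)
    (T : ℕ → Matrix (Fin 2) (Fin 2) ℂ)
    (hT : ∀ j, T (j + 1) =
      Matrix.of ![![0, 1],
        ![-α ^ 2 / (qint q (j + 2) * qint q (j + 1)), 2 * α / qint q (j + 2)]])
    (F : ℕ → Matrix (Fin 2) (Fin 2) ℂ)
    (hF0 : F 0 = 1) (hFs : ∀ k, F (k + 1) = T (k + 1) * F k) :
    ∀ k, k + 1 ≤ p →
      F k = Matrix.of
        ![![-((k : ℂ) - 1) * α ^ k / qfact q k, (k : ℂ) * α ^ (k - 1) / qfact q k],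
          ![-(k : ℂ) * α ^ (k + 1) / qfact q (k + 1), ((k : ℂ) + 1) * α ^ k / qfact q (k + 1)]] := by
  have hprim : IsPrimitiveRoot q (p + 1) := by
    simpa [hq] using isPrimitiveRoot_exp (p + 1) p.succ_ne_zero
  have hT' : ∀ j, T (j + 1) = degenerateTransfer q α j := hT
  intro k hk
  change F k = degenerateTransferProduct q α k
  induction k with
  | zero => rw [hF0, degenerateTransferProduct_zero]
  | succ k ih =>
    rw [hFs, hT', ih (by omega), degenerateTransfer_mul_degenerateTransferProduct α
      (hprim.qfact_ne_zero (by omega)) (hprim.qint_ne_zero (by omega) (by omega))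
      (hprim.qint_ne_zero (by omega) (by omega))]

/-- Degenerate case `c₁ = -2α`, `c₂ = α²`: with `T_{j+1}` having rows `(0,1)` and
`(-α²/([j+2]_q[j+1]_q), 2α/[j+2]_q)` and `F_k = T_k ⋯ T_1`, one has for `0 ≤ k ≤ p-1`
`F_k = [[-(k-1)α^k/[k]_q!, kα^(k-1)/[k]_q!], [-kα^(k+1)/[k+1]_q!, (k+1)α^k/[k+1]_q!]]`. -/
theorem transfer_matrix_degenerate (p : ℕ) (hp : 1 ≤ p) (q : ℂ)
    (hq : q = Complex.exp (2 * Real.pi * Complex.I / (p + 1))) (α : ℂ)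
    (T : ℕ → Matrix (Fin 2) (Fin 2) ℂ)
    (hT : ∀ j, T (j + 1) =
      Matrix.of ![![0, 1],
        ![-α ^ 2 / (qint q (j + 2) * qint q (j + 1)), 2 * α / qint q (j + 2)]])
    (F : ℕ → Matrix (Fin 2) (Fin 2) ℂ)
    (hF0 : F 0 = 1) (hFs : ∀ k, F (k + 1) = T (k + 1) * F k) :
    ∀ k, k + 1 ≤ p →
      F k = Matrix.of
        ![![-((k : ℂ) - 1) * α ^ k / qfact q k, (k : ℂ) * α ^ (k - 1) / qfact q k],
          ![-(k : ℂ) * α ^ (k + 1) / qfact q (k + 1), ((k : ℂ) + 1) * α ^ k / qfact q (k + 1)]] :=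
  transfer_matrix_degenerate_general p q hq α T hT F hF0 hFs
end
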